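/- Define the vector field 𝔙 = (𝔙_x, 𝔙_y) on ℝ² by 𝔙_x(x,y) = −cos y + √3·sin(x/2)·sin(√3·y/2) + cos(√3·x/2)·cos(y/2) and 𝔙_y(x,y) = 𝔙_x(y,x). Then 𝔙 has dihedral symmetry of order 6: for ζ equal to either of the 2×2 matrices α = [[−1/2, −√3/2], [√3/2, −1/2]] or β = [[0,1],[1,0]], one has ζ⁻¹ ∘ 𝔙 ∘ ζ = 𝔙 (hence this holds for every ζ in the dihedral group 𝔻₃ = ⟨α,β⟩ of order 6). -/
import Mathlib


noncomputable section

open Real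

/-- Partial derivative in the `i`-th coordinate direction, on ℝ². -/
def pd2 (i : Fin 2) (F : (Fin 2 → ℝ) → ℝ) : (Fin 2 → ℝ) → ℝ :=
  fun v => deriv (fun t => F (Function.update v i t)) (v i)

/-- Laplacian of a scalar function on ℝ². -/
def lap2 (F : (Fin 2 → ℝ) → ℝ) : (Fin 2 → ℝ) → ℝ :=
  fun v => pd2 0 (pd2 0 F) v + pd2 1 (pd2 1 F) v

/-- Divergence of a vector field on ℝ². -/
def div2 (V : (Fin 2 → ℝ) → (Fin 2 → ℝ)) : (Fin 2 → ℝ) → ℝ :=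
  fun v => pd2 0 (fun w => V w 0) v + pd2 1 (fun w => V w 1) v

/-- The first component of the dihedral lambent field `𝔙`. -/
def Vx : ℝ → ℝ → ℝ := fun x y =>
  -Real.cos y + Real.sqrt 3 * Real.sin (x / 2) * Real.sin (Real.sqrt 3 * y / 2)
    + Real.cos (Real.sqrt 3 * x / 2) * Real.cos (y / 2)

/-- The dihedral lambent vector field `𝔙 = (𝔙ₓ(x,y), 𝔙ₓ(y,x))`. -/
def Vfield : (Fin 2 → ℝ) → (Fin 2 → ℝ) := fun v => ![Vx (v 0) (v 1), Vx (v 1) (v 0)]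

lemma key1 (x y : ℝ) :
    -1 / 2 *
        (-Real.cos (Real.sqrt 3 / 2 * x + -1 / 2 * y) +
            Real.sqrt 3 * Real.sin ((-1 / 2 * x + -Real.sqrt 3 / 2 * y) / 2) * Real.sin (Real.sqrt 3 * (Real.sqrt 3 / 2 * x + -1 / 2 * y) / 2) +
          Real.cos (Real.sqrt 3 * (-1 / 2 * x + -Real.sqrt 3 / 2 * y) / 2) * Real.cos ((Real.sqrt 3 / 2 * x + -1 / 2 * y) / 2)) +
      Real.sqrt 3 / 2 *
        (-Real.cos (-1 / 2 * x + -Real.sqrt 3 / 2 * y) +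
            Real.sqrt 3 * Real.sin ((Real.sqrt 3 / 2 * x + -1 / 2 * y) / 2) * Real.sin (Real.sqrt 3 * (-1 / 2 * x + -Real.sqrt 3 / 2 * y) / 2) +
          Real.cos (Real.sqrt 3 * (Real.sqrt 3 / 2 * x + -1 / 2 * y) / 2) * Real.cos ((-1 / 2 * x + -Real.sqrt 3 / 2 * y) / 2)) =
    -Real.cos y + Real.sqrt 3 * Real.sin (x / 2) * Real.sin (Real.sqrt 3 * y / 2) + Real.cos (Real.sqrt 3 * x / 2) * Real.cos (y / 2) := by
  have h3 : Real.sqrt 3 * Real.sqrt 3 = 3 := Real.mul_self_sqrt (by norm_num)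
  have hs : Real.sqrt 3 ^ 2 = 3 := Real.sq_sqrt (by norm_num)
  have ha : Real.sin (x/4) ^ 2 + Real.cos (x/4) ^ 2 = 1 := Real.sin_sq_add_cos_sq _
  have hb : Real.sin (y/4) ^ 2 + Real.cos (y/4) ^ 2 = 1 := Real.sin_sq_add_cos_sq _
  have hu : Real.sin (Real.sqrt 3*x/4) ^ 2 + Real.cos (Real.sqrt 3*x/4) ^ 2 = 1 := Real.sin_sq_add_cos_sq _
  have hv : Real.sin (Real.sqrt 3*y/4) ^ 2 + Real.cos (Real.sqrt 3*y/4) ^ 2 = 1 := Real.sin_sq_add_cos_sq _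
  rw [show Real.cos (Real.sqrt 3 / 2 * x + -1 / 2 * y) = Real.cos ((Real.sqrt 3*x/4 + Real.sqrt 3*x/4) - (y/4 + y/4)) from by rw [show ((Real.sqrt 3*x/4 + Real.sqrt 3*x/4) - (y/4 + y/4)) = (Real.sqrt 3 / 2 * x + -1 / 2 * y) by ring]]
  rw [show Real.sin ((-1 / 2 * x + -Real.sqrt 3 / 2 * y) / 2) = Real.sin ((-(x/4)) - Real.sqrt 3*y/4) from by rw [show ((-(x/4)) - Real.sqrt 3*y/4) = ((-1 / 2 * x + -Real.sqrt 3 / 2 * y) / 2) by ring]]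
  rw [show Real.sin (Real.sqrt 3 * (Real.sqrt 3 / 2 * x + -1 / 2 * y) / 2) = Real.sin ((x/4 + x/4 + x/4) - Real.sqrt 3*y/4) from by rw [show ((x/4 + x/4 + x/4) - Real.sqrt 3*y/4) = (Real.sqrt 3 * (Real.sqrt 3 / 2 * x + -1 / 2 * y) / 2) by linear_combination (-(x/4)) * h3]]
  rw [show Real.cos (Real.sqrt 3 * (-1 / 2 * x + -Real.sqrt 3 / 2 * y) / 2) = Real.cos ((-(Real.sqrt 3*x/4)) - (y/4 + y/4 + y/4)) from by rw [show ((-(Real.sqrt 3*x/4)) - (y/4 + y/4 + y/4)) = (Real.sqrt 3 * (-1 / 2 * x + -Real.sqrt 3 / 2 * y) / 2) by linear_combination (y/4) * h3]]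
  rw [show Real.cos ((Real.sqrt 3 / 2 * x + -1 / 2 * y) / 2) = Real.cos (Real.sqrt 3*x/4 - y/4) from by rw [show (Real.sqrt 3*x/4 - y/4) = ((Real.sqrt 3 / 2 * x + -1 / 2 * y) / 2) by ring]]
  rw [show Real.cos (-1 / 2 * x + -Real.sqrt 3 / 2 * y) = Real.cos ((-(x/4 + x/4)) - (Real.sqrt 3*y/4 + Real.sqrt 3*y/4)) from by rw [show ((-(x/4 + x/4)) - (Real.sqrt 3*y/4 + Real.sqrt 3*y/4)) = (-1 / 2 * x + -Real.sqrt 3 / 2 * y) by ring]]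
  rw [show Real.sin ((Real.sqrt 3 / 2 * x + -1 / 2 * y) / 2) = Real.sin (Real.sqrt 3*x/4 - y/4) from by rw [show (Real.sqrt 3*x/4 - y/4) = ((Real.sqrt 3 / 2 * x + -1 / 2 * y) / 2) by ring]]
  rw [show Real.sin (Real.sqrt 3 * (-1 / 2 * x + -Real.sqrt 3 / 2 * y) / 2) = Real.sin ((-(Real.sqrt 3*x/4)) - (y/4 + y/4 + y/4)) from by rw [show ((-(Real.sqrt 3*x/4)) - (y/4 + y/4 + y/4)) = (Real.sqrt 3 * (-1 / 2 * x + -Real.sqrt 3 / 2 * y) / 2) by linear_combination (y/4) * h3]]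
  rw [show Real.cos (Real.sqrt 3 * (Real.sqrt 3 / 2 * x + -1 / 2 * y) / 2) = Real.cos ((x/4 + x/4 + x/4) - Real.sqrt 3*y/4) from by rw [show ((x/4 + x/4 + x/4) - Real.sqrt 3*y/4) = (Real.sqrt 3 * (Real.sqrt 3 / 2 * x + -1 / 2 * y) / 2) by linear_combination (-(x/4)) * h3]]
  rw [show Real.cos ((-1 / 2 * x + -Real.sqrt 3 / 2 * y) / 2) = Real.cos ((-(x/4)) - Real.sqrt 3*y/4) from by rw [show ((-(x/4)) - Real.sqrt 3*y/4) = ((-1 / 2 * x + -Real.sqrt 3 / 2 * y) / 2) by ring]]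
  rw [show Real.cos (y) = Real.cos ((y/4 + y/4) + (y/4 + y/4)) from by rw [show ((y/4 + y/4) + (y/4 + y/4)) = (y) by ring]]
  rw [show Real.sin (x / 2) = Real.sin (x/4 + x/4) from by rw [show (x/4 + x/4) = (x / 2) by ring]]
  rw [show Real.sin (Real.sqrt 3 * y / 2) = Real.sin (Real.sqrt 3*y/4 + Real.sqrt 3*y/4) from by rw [show (Real.sqrt 3*y/4 + Real.sqrt 3*y/4) = (Real.sqrt 3 * y / 2) by ring]]
  rw [show Real.cos (Real.sqrt 3 * x / 2) = Real.cos (Real.sqrt 3*x/4 + Real.sqrt 3*x/4) from by rw [show (Real.sqrt 3*x/4 + Real.sqrt 3*x/4) = (Real.sqrt 3 * x / 2) by ring]]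
  rw [show Real.cos (y / 2) = Real.cos (y/4 + y/4) from by rw [show (y/4 + y/4) = (y / 2) by ring]]
  simp only [Real.cos_add, Real.sin_add, Real.cos_sub, Real.sin_sub, Real.cos_neg, Real.sin_neg]
  linear_combination ((1/2:ℝ)*(Real.sqrt 3)*(Real.sin (x/4))^2*(Real.sin (Real.sqrt 3*y/4))^2 + (-1/2:ℝ)*(Real.sqrt 3)*(Real.sin (x/4))^2*(Real.cos (Real.sqrt 3*y/4))^2 + (2:ℝ)*(Real.sqrt 3)*(Real.cos (x/4))*(Real.sin (x/4))*(Real.cos (Real.sqrt 3*y/4))*(Real.sin (Real.sqrt 3*y/4)) + (-1/2:ℝ)*(Real.sqrt 3)*(Real.cos (x/4))^2*(Real.sin (Real.sqrt 3*y/4))^2 + (1/2:ℝ)*(Real.sqrt 3)*(Real.cos (x/4))^2*(Real.cos (Real.sqrt 3*y/4))^2) * ha + ((1:ℝ) + (-1:ℝ)*(Real.sin (Real.sqrt 3*x/4))^2 + (1/2:ℝ)*(Real.cos (Real.sqrt 3*x/4))^2 + (1:ℝ)*(Real.sin (y/4))^2 + (-1/2:ℝ)*(Real.sin (y/4))^2*(Real.sin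 (Real.sqrt 3*x/4))^2 + (1:ℝ)*(Real.cos (y/4))*(Real.sin (y/4))*(Real.cos (Real.sqrt 3*x/4))*(Real.sin (Real.sqrt 3*x/4)) + (-7:ℝ)*(Real.cos (y/4))^2 + (2:ℝ)*(Real.cos (y/4))^2*(Real.sin (Real.sqrt 3*x/4))^2 + (3/2:ℝ)*(Real.cos (y/4))^2*(Real.cos (Real.sqrt 3*x/4))^2 + (-1/2:ℝ)*(Real.sqrt 3)^2*(Real.cos (Real.sqrt 3*x/4))^2 + (-1/2:ℝ)*(Real.sqrt 3)^2*(Real.sin (y/4))^2*(Real.cos (Real.sqrt 3*x/4))^2 + (-1:ℝ)*(Real.sqrt 3)^2*(Real.cos (y/4))*(Real.sin (y/4))*(Real.cos (Real.sqrt 3*x/4))*(Real.sin (Real.sqrt 3*x/4)) + (3/2:ℝ)*(Real.sqrt 3)^2*(Real.cos (y/4))^2*(Real.sin (Real.sqrt 3*x/4))^2 + (2:ℝ)*(Real.sqrt 3)^2*(Real.cos (y/4))^2*(Real.cos (Real.sqrt 3*x/4))^2) * hb + ((-1:ℝ) + (7/2:ℝ)*(Real.cos (y/4))^2 + (-2:ℝ)*(Real.cos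 (y/4))^4 + (3/2:ℝ)*(Real.sqrt 3)^2*(Real.cos (y/4))^2 + (-2:ℝ)*(Real.sqrt 3)^2*(Real.cos (y/4))^4) * hu + ((-1/2:ℝ)*(Real.cos (Real.sqrt 3*x/4))^2 + (-1:ℝ)*(Real.cos (y/4))*(Real.sin (y/4))*(Real.cos (Real.sqrt 3*x/4))*(Real.sin (Real.sqrt 3*x/4)) + (3/2:ℝ)*(Real.cos (y/4))^2 + (1:ℝ)*(Real.cos (y/4))^2*(Real.cos (Real.sqrt 3*x/4))^2 + (-2:ℝ)*(Real.cos (y/4))^4) * hs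

lemma key2 (x y : ℝ) :
    -Real.sqrt 3 / 2 *
        (-Real.cos (Real.sqrt 3 / 2 * x + -1 / 2 * y) +
            Real.sqrt 3 * Real.sin ((-1 / 2 * x + -Real.sqrt 3 / 2 * y) / 2) * Real.sin (Real.sqrt 3 * (Real.sqrt 3 / 2 * x + -1 / 2 * y) / 2) +
          Real.cos (Real.sqrt 3 * (-1 / 2 * x + -Real.sqrt 3 / 2 * y) / 2) * Real.cos ((Real.sqrt 3 / 2 * x + -1 / 2 * y) / 2)) +
      -1 / 2 *
        (-Real.cos (-1 / 2 * x + -Real.sqrt 3 / 2 * y) +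
            Real.sqrt 3 * Real.sin ((Real.sqrt 3 / 2 * x + -1 / 2 * y) / 2) * Real.sin (Real.sqrt 3 * (-1 / 2 * x + -Real.sqrt 3 / 2 * y) / 2) +
          Real.cos (Real.sqrt 3 * (Real.sqrt 3 / 2 * x + -1 / 2 * y) / 2) * Real.cos ((-1 / 2 * x + -Real.sqrt 3 / 2 * y) / 2)) =
    -Real.cos x + Real.sqrt 3 * Real.sin (y / 2) * Real.sin (Real.sqrt 3 * x / 2) + Real.cos (Real.sqrt 3 * y / 2) * Real.cos (x / 2) := by
  have h3 : Real.sqrt 3 * Real.sqrt 3 = 3 := Real.mul_self_sqrt (by norm_num)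
  have hs : Real.sqrt 3 ^ 2 = 3 := Real.sq_sqrt (by norm_num)
  have ha : Real.sin (x/4) ^ 2 + Real.cos (x/4) ^ 2 = 1 := Real.sin_sq_add_cos_sq _
  have hb : Real.sin (y/4) ^ 2 + Real.cos (y/4) ^ 2 = 1 := Real.sin_sq_add_cos_sq _
  have hu : Real.sin (Real.sqrt 3*x/4) ^ 2 + Real.cos (Real.sqrt 3*x/4) ^ 2 = 1 := Real.sin_sq_add_cos_sq _
  have hv : Real.sin (Real.sqrt 3*y/4) ^ 2 + Real.cos (Real.sqrt 3*y/4) ^ 2 = 1 := Real.sin_sq_add_cos_sq _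
  rw [show Real.cos (Real.sqrt 3 / 2 * x + -1 / 2 * y) = Real.cos ((Real.sqrt 3*x/4 + Real.sqrt 3*x/4) - (y/4 + y/4)) from by rw [show ((Real.sqrt 3*x/4 + Real.sqrt 3*x/4) - (y/4 + y/4)) = (Real.sqrt 3 / 2 * x + -1 / 2 * y) by ring]]
  rw [show Real.sin ((-1 / 2 * x + -Real.sqrt 3 / 2 * y) / 2) = Real.sin ((-(x/4)) - Real.sqrt 3*y/4) from by rw [show ((-(x/4)) - Real.sqrt 3*y/4) = ((-1 / 2 * x + -Real.sqrt 3 / 2 * y) / 2) by ring]]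
  rw [show Real.sin (Real.sqrt 3 * (Real.sqrt 3 / 2 * x + -1 / 2 * y) / 2) = Real.sin ((x/4 + x/4 + x/4) - Real.sqrt 3*y/4) from by rw [show ((x/4 + x/4 + x/4) - Real.sqrt 3*y/4) = (Real.sqrt 3 * (Real.sqrt 3 / 2 * x + -1 / 2 * y) / 2) by linear_combination (-(x/4)) * h3]]
  rw [show Real.cos (Real.sqrt 3 * (-1 / 2 * x + -Real.sqrt 3 / 2 * y) / 2) = Real.cos ((-(Real.sqrt 3*x/4)) - (y/4 + y/4 + y/4)) from by rw [show ((-(Real.sqrt 3*x/4)) - (y/4 + y/4 + y/4)) = (Real.sqrt 3 * (-1 / 2 * x + -Real.sqrt 3 / 2 * y) / 2) by linear_combination (y/4) * h3]]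
  rw [show Real.cos ((Real.sqrt 3 / 2 * x + -1 / 2 * y) / 2) = Real.cos (Real.sqrt 3*x/4 - y/4) from by rw [show (Real.sqrt 3*x/4 - y/4) = ((Real.sqrt 3 / 2 * x + -1 / 2 * y) / 2) by ring]]
  rw [show Real.cos (-1 / 2 * x + -Real.sqrt 3 / 2 * y) = Real.cos ((-(x/4 + x/4)) - (Real.sqrt 3*y/4 + Real.sqrt 3*y/4)) from by rw [show ((-(x/4 + x/4)) - (Real.sqrt 3*y/4 + Real.sqrt 3*y/4)) = (-1 / 2 * x + -Real.sqrt 3 / 2 * y) by ring]]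
  rw [show Real.sin ((Real.sqrt 3 / 2 * x + -1 / 2 * y) / 2) = Real.sin (Real.sqrt 3*x/4 - y/4) from by rw [show (Real.sqrt 3*x/4 - y/4) = ((Real.sqrt 3 / 2 * x + -1 / 2 * y) / 2) by ring]]
  rw [show Real.sin (Real.sqrt 3 * (-1 / 2 * x + -Real.sqrt 3 / 2 * y) / 2) = Real.sin ((-(Real.sqrt 3*x/4)) - (y/4 + y/4 + y/4)) from by rw [show ((-(Real.sqrt 3*x/4)) - (y/4 + y/4 + y/4)) = (Real.sqrt 3 * (-1 / 2 * x + -Real.sqrt 3 / 2 * y) / 2) by linear_combination (y/4) * h3]]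
  rw [show Real.cos (Real.sqrt 3 * (Real.sqrt 3 / 2 * x + -1 / 2 * y) / 2) = Real.cos ((x/4 + x/4 + x/4) - Real.sqrt 3*y/4) from by rw [show ((x/4 + x/4 + x/4) - Real.sqrt 3*y/4) = (Real.sqrt 3 * (Real.sqrt 3 / 2 * x + -1 / 2 * y) / 2) by linear_combination (-(x/4)) * h3]]
  rw [show Real.cos ((-1 / 2 * x + -Real.sqrt 3 / 2 * y) / 2) = Real.cos ((-(x/4)) - Real.sqrt 3*y/4) from by rw [show ((-(x/4)) - Real.sqrt 3*y/4) = ((-1 / 2 * x + -Real.sqrt 3 / 2 * y) / 2) by ring]]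
  rw [show Real.cos (x) = Real.cos ((x/4 + x/4) + (x/4 + x/4)) from by rw [show ((x/4 + x/4) + (x/4 + x/4)) = (x) by ring]]
  rw [show Real.sin (y / 2) = Real.sin (y/4 + y/4) from by rw [show (y/4 + y/4) = (y / 2) by ring]]
  rw [show Real.sin (Real.sqrt 3 * x / 2) = Real.sin (Real.sqrt 3*x/4 + Real.sqrt 3*x/4) from by rw [show (Real.sqrt 3*x/4 + Real.sqrt 3*x/4) = (Real.sqrt 3 * x / 2) by ring]]
  rw [show Real.cos (Real.sqrt 3 * y / 2) = Real.cos (Real.sqrt 3*y/4 + Real.sqrt 3*y/4) from by rw [show (Real.sqrt 3*y/4 + Real.sqrt 3*y/4) = (Real.sqrt 3 * y / 2) by ring]]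
  rw [show Real.cos (x / 2) = Real.cos (x/4 + x/4) from by rw [show (x/4 + x/4) = (x / 2) by ring]]
  simp only [Real.cos_add, Real.sin_add, Real.cos_sub, Real.sin_sub, Real.cos_neg, Real.sin_neg]
  linear_combination ((1:ℝ) + (-1:ℝ)*(Real.sin (Real.sqrt 3*y/4))^2 + (1/2:ℝ)*(Real.cos (Real.sqrt 3*y/4))^2 + (1:ℝ)*(Real.sin (x/4))^2 + (-1/2:ℝ)*(Real.sin (x/4))^2*(Real.sin (Real.sqrt 3*y/4))^2 + (-1:ℝ)*(Real.cos (x/4))*(Real.sin (x/4))*(Real.cos (Real.sqrt 3*y/4))*(Real.sin (Real.sqrt 3*y/4)) + (-7:ℝ)*(Real.cos (x/4))^2 + (2:ℝ)*(Real.cos (x/4))^2*(Real.sin (Real.sqrt 3*y/4))^2 + (3/2:ℝ)*(Real.cos (x/4))^2*(Real.cos (Real.sqrt 3*y/4))^2 + (-1/2:ℝ)*(Real.sqrt 3)^2*(Real.cos (Real.sqrt 3*y/4))^2 + (-1/2:ℝ)*(Real.sqrt 3)^2*(Real.sin (x/4))^2*(Real.cos (Real.sqrt 3*y/4))^2 +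 (1:ℝ)*(Real.sqrt 3)^2*(Real.cos (x/4))*(Real.sin (x/4))*(Real.cos (Real.sqrt 3*y/4))*(Real.sin (Real.sqrt 3*y/4)) + (3/2:ℝ)*(Real.sqrt 3)^2*(Real.cos (x/4))^2*(Real.sin (Real.sqrt 3*y/4))^2 + (2:ℝ)*(Real.sqrt 3)^2*(Real.cos (x/4))^2*(Real.cos (Real.sqrt 3*y/4))^2) * ha + ((-1/2:ℝ)*(Real.sqrt 3)*(Real.sin (y/4))^2*(Real.sin (Real.sqrt 3*x/4))^2 + (1/2:ℝ)*(Real.sqrt 3)*(Real.sin (y/4))^2*(Real.cos (Real.sqrt 3*x/4))^2 + (2:ℝ)*(Real.sqrt 3)*(Real.cos (y/4))*(Real.sin (y/4))*(Real.cos (Real.sqrt 3*x/4))*(Real.sin (Real.sqrt 3*x/4)) + (1/2:ℝ)*(Real.sqrt 3)*(Real.cos (y/4))^2*(Real.sin (Real.sqrt 3*x/4))^2 + (-1/2:ℝ)*(Real.sqrt 3)*(Real.cos (y/4))^2*(Real.cos (Real.sqrt 3*x/4))^2) * hb + ((-1:ℝ) + (7/2:ℝ)*(Real.cos (x/4))^2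 + (-2:ℝ)*(Real.cos (x/4))^4 + (3/2:ℝ)*(Real.sqrt 3)^2*(Real.cos (x/4))^2 + (-2:ℝ)*(Real.sqrt 3)^2*(Real.cos (x/4))^4) * hv + ((-1/2:ℝ)*(Real.cos (Real.sqrt 3*y/4))^2 + (1:ℝ)*(Real.cos (x/4))*(Real.sin (x/4))*(Real.cos (Real.sqrt 3*y/4))*(Real.sin (Real.sqrt 3*y/4)) + (3/2:ℝ)*(Real.cos (x/4))^2 + (1:ℝ)*(Real.cos (x/4))^2*(Real.cos (Real.sqrt 3*y/4))^2 + (-2:ℝ)*(Real.cos (x/4))^4) * hs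

open Matrix in
/-- `𝔙` is invariant under conjugation by the generators `α`, `β` of the
dihedral group `𝔻₃` of order 6. -/
theorem dihedral_V_symmetry :
    let α : Matrix (Fin 2) (Fin 2) ℝ :=
      !![-1/2, -Real.sqrt 3 / 2; Real.sqrt 3 / 2, -1/2]
    let β : Matrix (Fin 2) (Fin 2) ℝ := !![0, 1; 1, 0]
    (∀ v, α⁻¹.mulVec (Vfield (α.mulVec v)) = Vfield v) ∧
    (∀ v, β⁻¹.mulVec (Vfield (β.mulVec v)) = Vfield v) := by
  intro α β
  constructor
  · intro v
    have h3 : Real.sqrt 3 * Real.sqrt 3 = 3 := Real.mul_self_sqrt (by norm_num)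
    have hinv : α⁻¹ = !![-1/2, Real.sqrt 3/2; -Real.sqrt 3/2, -1/2] := by
      apply Matrix.inv_eq_left_inv
      ext i j
      fin_cases i <;> fin_cases j <;>
        simp [α, Matrix.mul_apply, Fin.sum_univ_two] <;> nlinarith [h3]
    funext i
    fin_cases i
    · simp only [hinv, α, Vfield, Matrix.mulVec, dotProduct, Fin.sum_univ_two, Vx]
      simp [Matrix.cons_val_zero, Matrix.cons_val_one]
      exact key1 (v 0) (v 1)
    · simp only [hinv, α, Vfield, Matrix.mulVec, dotProduct, Fin.sum_univ_two, Vx]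
      simp [Matrix.cons_val_zero, Matrix.cons_val_one]
      exact key2 (v 0) (v 1)
  · intro v
    have hinv : β⁻¹ = β := by
      apply Matrix.inv_eq_left_inv
      ext i j
      fin_cases i <;> fin_cases j <;> simp [β, Matrix.mul_apply, Fin.sum_univ_two]
    funext i
    fin_cases i <;>
      simp [hinv, β, Vfield, Matrix.mulVec, dotProduct, Fin.sum_univ_two, Vx]
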